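/- arXiv:1210.7620 — 2 statements merged into one kernel-verified Lean document; each statement's English description precedes it below -/
import Mathlib

section
/- For j ≥ 1, if a binary word ω with |ω|_0 = |ω|_1 avoids the factor (10)^j1 and does not end with (10)^{j-1}1 as the final part of a suffix of the form 0η1(01)^{j-1} with η negative, and does not end with (10)^j, then for every 1 ≤ h ≤ j the word ω·0·(01)^{h-1}·1 avoids the factor (10)^j1 and satisfies |number of 0's| = |number of 1's|. -/
/-- The pattern `(10)^j 1` (`true` = 1, `false` = 0). -/
def pat (j : ℕ) : List Bool := (List.replicate j [true, false]).flatten ++ [true]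

/-- `(10)^j`. -/
def alt (j : ℕ) : List Bool := (List.replicate j [true, false]).flatten

/-- `(01)^j`. -/
def alt' (j : ℕ) : List Bool := (List.replicate j [false, true]).flatten

def ht (w : List Bool) : ℤ := (w.count true : ℤ) - (w.count false : ℤ)

/-- A word is negative (as a path) if it stays weakly below the x-axis and
returns to height 0. -/
def Negative (w : List Bool) : Prop := ht w = 0 ∧ ∀ p, p <+: w → ht p ≤ 0

/-
(10)^j1 = 1(01)^j alternates, so a nonempty prefix of `0(01)^{h-1}1` can only be a suffix of it
when it is `01`, forcing `h = 1`. As `0(01)^{h-1}1` is too short to contain (10)^j1, an occurrence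
of (10)^j1 in `ω0(01)^{h-1}1` lies in `ω`, or `h = 1` and `ω` ends with `1(01)^{j-1}`. In the latter case the prefix of `ω` before that
suffix has height `-1`, and cutting it after the last down step from height `0` to `-1` writes it
as `μ0η` with `η` negative, against the hypothesis on the suffixes of `ω`.
-/

lemma alt'_succ (k : ℕ) : alt' (k + 1) = false :: true :: alt' k := by
  simp [alt', List.replicate_succ]

lemma alt'_succ_eq_append (k : ℕ) : alt' (k + 1) = alt' k ++ [false, true] := by
  simp [alt', List.replicate_succ']

@[simp] lemma count_alt' (b : Bool) (k : ℕ) : (alt' k).count b = k := by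
  induction k with
  | zero => simp [alt']
  | succ k ih => cases b <;> simp [alt'_succ, ih]

@[simp] lemma length_alt' (k : ℕ) : (alt' k).length = 2 * k := by
  induction k with
  | zero => simp [alt']
  | succ k ih => simp only [alt'_succ, List.length_cons, ih]; ring

lemma pat_succ (k : ℕ) : pat (k + 1) = pat k ++ [false, true] := by
  simp [pat, List.replicate_succ']

lemma pat_eq_cons (j : ℕ) : pat j = true :: alt' j := by
  induction j with
  | zero => simp [pat, alt']
  | succ k ih => rw [pat_succ, ih, alt'_succ_eq_append, List.cons_append]

@[simp] lemma length_pat (j : ℕ) : (pat j).length = 2 * j + 1 := by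
  simp [pat_eq_cons]

lemma isChain_ne_pat (j : ℕ) : (pat j).IsChain (· ≠ ·) := by
  rw [pat_eq_cons]
  induction j with
  | zero => simp [alt']
  | succ k ih => simpa [alt'_succ] using ih

lemma eq_of_suffix_pat_of_prefix {j k : ℕ} {b : List Bool} (hb : b ≠ []) (hpat : b <:+ pat j)
    (hpre : b <+: false :: alt' k ++ [true]) : k = 0 ∧ b = [false, true] := by
  match b, k, hb, hpre with
  | [_], _, _, hpre =>
    obtain rfl : _ = false := by simpa using hpre.head
    simp [pat] at hpat
  | _ :: _ :: _, 0, _, hpre =>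
    simpa [alt', List.cons_prefix_cons] using hpre
  | c :: d :: b', k + 1, _, hpre =>
    simp only [alt'_succ, List.cons_append, List.cons_prefix_cons] at hpre
    obtain ⟨rfl, rfl, -⟩ := hpre
    have hff : [false, false] <:+: pat j :=
      (List.prefix_append [false, false] b').isInfix.trans hpat.isInfix
    simpa using (isChain_ne_pat j).infix hff

@[simp] lemma ht_append (u v : List Bool) : ht (u ++ v) = ht u + ht v := by
  simp only [ht, List.count_append]; push_cast; ring

@[simp] lemma ht_cons_true (u : List Bool) : ht (true :: u) = ht u + 1 := by
  grind [ht]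

@[simp] lemma ht_cons_false (u : List Bool) : ht (false :: u) = ht u - 1 := by
  grind [ht]

@[simp] lemma ht_alt' (k : ℕ) : ht (alt' k) = 0 := by
  simp [ht]

lemma negative_of_forall_suffix {η : List Bool} (h0 : ht η = 0)
    (hsuf : ∀ q, q <:+ η → 0 ≤ ht q) : Negative η := by
  refine ⟨h0, fun p ⟨q, hpq⟩ => ?_⟩
  have := hsuf q ⟨p, hpq⟩
  have := congrArg ht hpq
  simp only [ht_append] at this; linarith

lemma forall_suffix_nonneg_or_exists_negative (s : List Bool) :
    (∀ q, q <:+ s → 0 ≤ ht q) ∨ ∃ μ η, s = μ ++ false :: η ∧ Negative η := by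
  induction s with
  | nil => simp [ht]
  | cons c s ih =>
    rcases ih with hsuf | ⟨μ, η, rfl, hη⟩
    · by_cases hcs : 0 ≤ ht (c :: s)
      · left
        intro q hq
        rcases List.suffix_cons_iff.mp hq with rfl | hq
        exacts [hcs, hsuf q hq]
      · have hs := hsuf s (List.suffix_refl s)
        cases c
        · refine Or.inr ⟨[], s, rfl, negative_of_forall_suffix ?_ hsuf⟩
          simp only [ht_cons_false] at hcs
          omega
        · simp only [ht_cons_true] at hcs
          omega
    · exact Or.inr ⟨c :: μ, η, rfl, hη⟩

lemma exists_negative_of_ht_neg {s : List Bool} (hs : ht s < 0) :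
    ∃ μ η, s = μ ++ false :: η ∧ Negative η := by
  refine (forall_suffix_nonneg_or_exists_negative s).resolve_left fun hsuf => ?_
  exact (hsuf s (List.suffix_refl s)).not_gt hs

lemma exists_negative_of_pat_suffix {ω : List Bool} {k : ℕ} (hω : ht ω = 0)
    (hpat : pat k <:+ ω) :
    ∃ μ η, Negative η ∧ ω = μ ++ [false] ++ η ++ [true] ++ alt' k := by
  obtain ⟨s, rfl⟩ := hpat
  have hs : ht s < 0 := by
    simp only [pat_eq_cons, ht_append, ht_cons_true, ht_alt'] at hω
    omega
  obtain ⟨μ, η, rfl, hη⟩ := exists_negative_of_ht_neg hs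
  exact ⟨μ, η, hη, by simp [pat_eq_cons]⟩

theorem stmt3_general (j : ℕ) (ω : List Bool)
    (hzero : ω.count false = ω.count true)
    (havoid : ¬ pat j <:+: ω)
    (hsuf1 : ¬ ∃ μ η, Negative η ∧
        ω = μ ++ [false] ++ η ++ [true] ++ alt' (j - 1)) :
    ∀ h, 1 ≤ h → h ≤ j →
      ¬ pat j <:+: (ω ++ [false] ++ alt' (h - 1) ++ [true]) ∧
      (ω ++ [false] ++ alt' (h - 1) ++ [true]).count false
        = (ω ++ [false] ++ alt' (h - 1) ++ [true]).count true := by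
  intro h h1 hhj
  refine ⟨?_, by simp [hzero]⟩
  rw [List.append_assoc, List.append_assoc, List.infix_append_iff_ne_nil]
  rintro (hω | hA | ⟨a, b, -, hb, hpat, ha, hbA⟩)
  · exact havoid hω
  · have := hA.length_le
    simp only [length_pat, List.length_append, List.length_cons, List.length_nil,
      length_alt'] at this
    omega
  · obtain ⟨hh, rfl⟩ := eq_of_suffix_pat_of_prefix hb ⟨a, hpat.symm⟩ (by simpa using hbA)
    obtain ⟨k, rfl⟩ : ∃ k, j = k + 1 := ⟨j - 1, by omega⟩
    rw [pat_succ, List.append_left_inj] at hpat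
    subst hpat
    exact hsuf1 (exists_negative_of_pat_suffix (by simp [ht, hzero]) ha)

theorem stmt3 (j : ℕ) (hj : 1 ≤ j) (ω : List Bool)
    (hzero : ω.count false = ω.count true)
    (havoid : ¬ pat j <:+: ω)
    (hsuf1 : ¬ ∃ μ η, Negative η ∧
        ω = μ ++ [false] ++ η ++ [true] ++ alt' (j - 1))
    (hsuf2 : ¬ alt j <:+ ω) :
    ∀ h, 1 ≤ h → h ≤ j →
      ¬ pat j <:+: (ω ++ [false] ++ alt' (h - 1) ++ [true]) ∧
      (ω ++ [false] ++ alt' (h - 1) ++ [true]).count false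
        = (ω ++ [false] ++ alt' (h - 1) ++ [true]).count true :=
  stmt3_general j ω hzero havoid hsuf1
end

section
/- For j ≥ 1, if ω is a binary word avoiding the factor (10)^j1, ending with the suffix (10)^j, and such that the associated lattice path (1 ↦ up step, 0 ↦ down step) ends at ordinate 1, then for each 1 ≤ h ≤ j the word obtained by inserting (10)^{h-1}·1 immediately before the final suffix (10)^j also avoids the factor (10)^j1. -/
lemma alt_length (j : ℕ) : (alt j).length = 2*j := by
  unfold alt
  induction j with
  | zero => rfl
  | succ j ih => rw [List.replicate_succ]; simp only [List.flatten_cons, List.length_append, ih]; simp; omega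

lemma alt_add (a b : ℕ) : alt (a+b) = alt a ++ alt b := by
  unfold alt; rw [List.replicate_add, List.flatten_append]

lemma alt_succ (a : ℕ) : alt (a+1) = true :: false :: alt a := by
  rw [show a+1 = 1+a by omega, alt_add]; rfl

lemma alt_getElem? (j i : ℕ) (h : i < 2*j) : (alt j)[i]? = some (decide (i % 2 = 0)) := by
  induction j generalizing i with
  | zero => omega
  | succ j ih =>
    rw [alt_succ]
    match i with
    | 0 => simp
    | 1 => simp
    | (k+2) =>
      have hk : k < 2*j := by omega
      have := ih k hk
      simp only [List.getElem?_cons_succ, this]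
      congr 1
      have : (k+2) % 2 = k % 2 := by omega
      rw [this]

lemma pat_eq (j : ℕ) : pat j = alt j ++ [true] := rfl

lemma pat_length (j : ℕ) : (pat j).length = 2*j + 1 := by
  rw [pat_eq]; simp [alt_length]

theorem stmt4 (j : ℕ) (hj : 1 ≤ j) (ω ω' : List Bool)
    (hdec : ω = ω' ++ alt j)
    (havoid : ¬ pat j <:+: ω)
    (hend : ht ω = 1) :
    ∀ h, 1 ≤ h → h ≤ j →
      ¬ pat j <:+: (ω' ++ alt (h - 1) ++ [true] ++ alt j) := by
  intro h hh1 hhj hinf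
  obtain ⟨s, t, hst⟩ := hinf
  set P : List Bool := ω' ++ alt (h-1) ++ [true] with hP
  have hW : s ++ (alt j ++ (true :: t)) = P ++ alt j := by
    have := hst
    rw [List.append_assoc, pat_eq, List.append_assoc] at this
    simpa using this
  have hlen : s.length + (2*j + (t.length + 1)) = P.length + 2*j := by
    have := congrArg List.length hW
    simpa [alt_length] using this
  have hPlen : P.length = s.length + t.length + 1 := by omega
  have hQ : P = (ω' ++ alt (h-1)) ++ [true] := by
    rw [hP, List.append_assoc]
  have hQlen : (ω' ++ alt (h-1)).length + 1 = P.length := by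
    rw [hQ]; simp; omega
  by_cases hcase : 2*j ≤ t.length
  · -- occurrence entirely inside P
    have hpre : (s ++ pat j) <+: P ++ alt j := ⟨t, hst⟩
    have hle : (s ++ pat j).length ≤ P.length := by
      simp only [List.length_append, pat_length]; omega
    have hpre2 : (s ++ pat j) <+: P := by
      have := List.prefix_take_iff.2 ⟨hpre, le_refl _⟩
      rw [List.take_append_of_le_length hle] at this
      exact this.trans (List.take_prefix _ _)
    have hPω : P <:+: ω := by
      refine ⟨[], false :: alt (j - h), ?_⟩
      have hsplit : alt j = alt (h-1) ++ alt ((j-h)+1) := by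
        rw [← alt_add]; congr 1; omega
      rw [hdec, hsplit, alt_succ, hP]
      simp
    obtain ⟨u, hu⟩ := hpre2
    have hinfP : pat j <:+: P := ⟨s, u, by simpa [List.append_assoc] using hu⟩
    exact havoid (hinfP.trans hPω)
  · -- the occurrence sticks out into the final alt j
    have L1 : (s ++ (alt j ++ (true :: t)))[s.length + 2*j]? = some true := by
      rw [List.getElem?_append_right (by omega)]
      have h1 : s.length + 2*j - s.length = 2*j := by omega
      rw [h1, List.getElem?_append_right (by rw [alt_length]), alt_length]
      simp
    have R1 : (P ++ alt j)[s.length + 2*j]? =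
        some (decide ((2*j - t.length - 1) % 2 = 0)) := by
      rw [List.getElem?_append_right (by omega)]
      have h1 : s.length + 2*j - P.length = 2*j - t.length - 1 := by omega
      rw [h1, alt_getElem? j _ (by omega)]
    have e1 : some true = some (decide ((2*j - t.length - 1) % 2 = 0)) := by
      rw [← L1, ← R1, hW]
    have htodd : t.length % 2 = 1 := by
      simp only [Option.some_inj] at e1
      rcases Nat.even_or_odd t.length with he | ho
      · exfalso
        have he' := Nat.even_iff.mp he
        have h2 : (2*j - t.length - 1) % 2 = 1 := by omega
        rw [h2] at e1; simp at e1
      · exact Nat.odd_iff.mp ho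
    have L2 : (s ++ (alt j ++ (true :: t)))[s.length + t.length]? = some false := by
      rw [List.getElem?_append_right (by omega)]
      have h1 : s.length + t.length - s.length = t.length := by omega
      rw [h1, List.getElem?_append_left (by rw [alt_length]; omega),
        alt_getElem? j _ (by omega)]
      simp [htodd]
    have R2 : (P ++ alt j)[s.length + t.length]? = some true := by
      rw [List.getElem?_append_left (by omega), hQ,
        List.getElem?_append_right (by omega)]
      have h1 : s.length + t.length - (ω' ++ alt (h-1)).length = 0 := by omega
      rw [h1]; rfl
    have e2 : some false = some true := by rw [← L2, ← R2, hW]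
    simp at e2
end
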